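/- arXiv:2412.10241 — 7 statements merged into one kernel-verified Lean document; each statement's English description precedes it below -/
import Mathlib

section
/- Let X and Y be topological spaces with X first countable, and let f : X → Y be an open surjection. Let x ∈ X and let (y_n) be a sequence in Y converging to f(x). Then there exists a sequence (x_n) in X such that f(x_n) = y_n for every n and x_n → x in X. -/
/-- **Sequence Lifting Lemma.** If `X` is first countable, `f : X → Y` is an open
surjection, and a sequence `y n` converges to `f x`, then there is a sequence
`x n` with `f (x n) = y n` for all `n` converging to `x`. -/
theorem sequence_lifting {X Y : Type*} [TopologicalSpace X] [TopologicalSpace Y]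
    [FirstCountableTopology X]
    (f : X → Y) (hf_open : IsOpenMap f) (hf_surj : Function.Surjective f)
    (x : X) (y : ℕ → Y) (hy : Filter.Tendsto y Filter.atTop (nhds (f x))) :
    ∃ u : ℕ → X, (∀ n, f (u n) = y n) ∧ Filter.Tendsto u Filter.atTop (nhds x) := by
  classical
  obtain ⟨s, hs⟩ := (nhds x).exists_antitone_basis
  have himg : ∀ k : ℕ, ∃ N, ∀ n ≥ N, y n ∈ f '' s k := by
    intro k
    have h1 : f '' s k ∈ nhds (f x) := hf_open.nhds_le x (Filter.image_mem_map (hs.mem k))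
    exact Filter.eventually_atTop.mp (hy.eventually_mem h1)
  choose N0 hN0 using himg
  set N : ℕ → ℕ := fun k => (Finset.range (k + 1)).sup N0 with hNdef
  have hNmono : Monotone N := fun a b hab =>
    Finset.sup_mono (Finset.range_subset_range.mpr (by omega))
  have hNle : ∀ k, N0 k ≤ N k := fun k => Finset.le_sup (Finset.self_mem_range_succ k)
  set K : ℕ → ℕ := fun n => Nat.findGreatest (fun k => N k ≤ n) n with hKdef
  have key : ∀ n, N (K n) ≤ n → ∃ x', x' ∈ s (K n) ∧ f x' = y n := by
    intro n h
    obtain ⟨x', hx', hfx⟩ := hN0 (K n) n (le_trans (hNle _) h)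
    exact ⟨x', hx', hfx⟩
  set u : ℕ → X := fun n =>
    if h : N (K n) ≤ n then (key n h).choose else (hf_surj (y n)).choose with hudef
  refine ⟨u, fun n => ?_, ?_⟩
  · by_cases h : N (K n) ≤ n
    · simp only [hudef, dif_pos h]
      exact (key n h).choose_spec.2
    · simp only [hudef, dif_neg h]
      exact (hf_surj (y n)).choose_spec
  · rw [hs.toHasBasis.tendsto_right_iff]
    intro k _
    rw [Filter.eventually_atTop]
    refine ⟨max k (N k), fun n hn => ?_⟩
    have hkn : k ≤ n := le_trans (le_max_left _ _) hn
    have hNkn : N k ≤ n := le_trans (le_max_right _ _) hn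
    have hKk : k ≤ K n := Nat.le_findGreatest hkn hNkn
    have hKspec : N (K n) ≤ n := Nat.findGreatest_spec (P := fun k => N k ≤ n) hkn hNkn
    have hmem : u n ∈ s (K n) := by
      simp only [hudef, dif_pos hKspec]
      exact (key n hKspec).choose_spec.1
    exact hs.antitone hKk hmem
end

section
/- Let n ∈ ℕ. If (x_k) is a sequence in X converging to x ∈ X and the equivalence class [x] has at least n elements, then for all sufficiently large k the class [x_k] has at least n elements. -/
/-- Let `X` be a second countable, locally compact, Hausdorff space with an
equivalence relation whose quotient map is open.  If `xₖ → x` and the class of `x`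
has at least `n` elements, then eventually the class of `xₖ` has at least `n`
elements. -/
theorem eventually_le_encard_class {X : Type*} [TopologicalSpace X]
    [SecondCountableTopology X] [LocallyCompactSpace X] [T2Space X]
    (s : Setoid X) (hq : IsOpenMap (Quotient.mk s))
    (n : ℕ) (xk : ℕ → X) (x : X)
    (hxk : Filter.Tendsto xk Filter.atTop (nhds x))
    (hx : (n : ℕ∞) ≤ {y | s.r y x}.encard) :
    ∀ᶠ k in Filter.atTop, (n : ℕ∞) ≤ {y | s.r y (xk k)}.encard := by
  classical
  obtain ⟨t, hts, htn⟩ := Set.exists_subset_encard_eq hx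
  have htfin : t.Finite := Set.finite_of_encard_eq_coe htn
  obtain ⟨U, hU, hUd⟩ := htfin.t2_separation
  set Q : X → Quotient s := Quotient.mk s with hQ
  have hQcont : Continuous Q := continuous_quotient_mk'
  have hV : ∀ᶠ k in Filter.atTop, ∀ y ∈ t, Q (xk k) ∈ Q '' (U y) := by
    have htend : Filter.Tendsto (fun k => Q (xk k)) Filter.atTop (nhds (Q x)) :=
      (hQcont.tendsto x).comp hxk
    have hmem : (⋂ y ∈ t, Q '' (U y)) ∈ nhds (Q x) := by
      refine (htfin.isOpen_biInter (fun y _ => hq _ (hU y).2)).mem_nhds ?_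
      simp only [Set.mem_iInter]
      intro y hy
      exact ⟨y, (hU y).1, Quotient.sound (hts hy)⟩
    filter_upwards [htend hmem] with k hk
    simpa only [Set.mem_preimage, Set.mem_iInter] using hk
  filter_upwards [hV] with k hk
  choose f hf1 hf2 using hk
  set g : X → X := fun y => if hy : y ∈ t then f y hy else y with hg
  have hinj : Set.InjOn g t := by
    intro y1 h1 y2 h2 he
    by_contra hne
    have h1' : g y1 ∈ U y1 := by simp only [hg, dif_pos h1]; exact hf1 y1 h1
    have h2' : g y2 ∈ U y2 := by simp only [hg, dif_pos h2]; exact hf1 y2 h2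
    exact (hUd h1 h2 hne).le_bot ⟨h1', he ▸ h2'⟩
  have hsub : g '' t ⊆ {y | s.r y (xk k)} := by
    rintro z ⟨y, hy, rfl⟩
    have : Q (g y) = Q (xk k) := by simp only [hg, dif_pos hy]; exact hf2 y hy
    exact @Quotient.exact _ s _ _ this
  calc (n : ℕ∞) = t.encard := htn.symm
    _ = (g '' t).encard := (hinj.encard_image).symm
    _ ≤ _ := Set.encard_mono hsub
end

section
/- For every n ∈ ℕ: (1) the set X_{≤n} = {x ∈ X : |[x]| ≤ n} is closed in X; (2) the set X_{≥n} = {x ∈ X : |[x]| ≥ n} is open in X; (3) the set X_{=n} = {x ∈ X : |[x]| = n} is locally closed in X (the intersection of an open set and a closed set), and hence locally compact in the subspace topology. Each of these sets is a union of equivalence classes. -/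
/-- If the quotient map of a setoid on a Hausdorff space is open, then the set of
points whose class has at least `n` elements is open. -/
lemma isOpen_ge_card {X : Type*} [TopologicalSpace X] [T2Space X]
    (s : Setoid X) (hq : IsOpenMap (Quotient.mk s)) (n : ℕ) :
    IsOpen {x : X | (n : ℕ∞) ≤ {y | s.r y x}.encard} := by
  rw [isOpen_iff_forall_mem_open]
  intro x hx
  obtain ⟨t, hts, htn⟩ := Set.exists_subset_encard_eq hx
  have htfin : t.Finite := Set.finite_of_encard_eq_coe htn
  obtain ⟨U, hU, hdisj⟩ := htfin.t2_separation
  refine ⟨⋂ y ∈ t, (Quotient.mk s) ⁻¹' (Quotient.mk s '' U y), ?_, ?_, ?_⟩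
  · intro z hz
    simp only [Set.mem_iInter, Set.mem_preimage] at hz
    have key : ∀ y ∈ t, ∃ w, w ∈ U y ∧ s.r w z := by
      intro y hy
      obtain ⟨w, hw, hwz⟩ := hz y hy
      exact ⟨w, hw, Quotient.exact hwz⟩
    choose! f hf1 hf2 using key
    have hinj : Set.InjOn f t := by
      intro y1 hy1 y2 hy2 hfe
      by_contra hne
      exact Set.disjoint_left.mp (hdisj hy1 hy2 hne) (hf1 y1 hy1) (hfe ▸ hf1 y2 hy2)
    have hsub : f '' t ⊆ {y | s.r y z} := by
      rintro _ ⟨y, hy, rfl⟩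
      exact hf2 y hy
    calc (n : ℕ∞) = t.encard := htn.symm
      _ = (f '' t).encard := (hinj.encard_image).symm
      _ ≤ _ := Set.encard_mono hsub
  · exact htfin.isOpen_biInter fun y _ =>
      (hq _ (hU y).2).preimage continuous_quotient_mk'
  · simp only [Set.mem_iInter, Set.mem_preimage]
    intro y hy
    exact ⟨y, (hU y).1, Quotient.sound (hts hy)⟩

/-- Let `X` be a second countable, locally compact, Hausdorff space with an
equivalence relation whose quotient map is open.  Then `X_{≤n}` is closed,
`X_{≥n}` is open, `X_{=n}` is locally closed (hence locally compact), and all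
three sets are unions of equivalence classes. -/
theorem classes_card_sets {X : Type*} [TopologicalSpace X]
    [SecondCountableTopology X] [LocallyCompactSpace X] [T2Space X]
    (s : Setoid X) (hq : IsOpenMap (Quotient.mk s)) (n : ℕ) :
    IsClosed {x : X | {y | s.r y x}.encard ≤ (n : ℕ∞)} ∧
    IsOpen {x : X | (n : ℕ∞) ≤ {y | s.r y x}.encard} ∧
    IsLocallyClosed {x : X | {y | s.r y x}.encard = (n : ℕ∞)} ∧
    LocallyCompactSpace {x : X // {y | s.r y x}.encard = (n : ℕ∞)} ∧
    (∀ x x' : X, s.r x x' →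
      ((({y | s.r y x}.encard ≤ (n : ℕ∞)) ↔ ({y | s.r y x'}.encard ≤ (n : ℕ∞))) ∧
       (((n : ℕ∞) ≤ {y | s.r y x}.encard) ↔ ((n : ℕ∞) ≤ {y | s.r y x'}.encard)) ∧
       (({y | s.r y x}.encard = (n : ℕ∞)) ↔ ({y | s.r y x'}.encard = (n : ℕ∞))))) := by
  have hle : IsClosed {x : X | {y | s.r y x}.encard ≤ (n : ℕ∞)} := by
    have : {x : X | {y | s.r y x}.encard ≤ (n : ℕ∞)} =
        {x : X | ((n + 1 : ℕ) : ℕ∞) ≤ {y | s.r y x}.encard}ᶜ := by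
      ext x
      simp only [Set.mem_setOf_eq, Set.mem_compl_iff, not_le]
      push_cast
      rw [ENat.lt_add_one_iff (ENat.coe_ne_top n)]
    rw [this]
    exact (isOpen_ge_card s hq (n + 1)).isClosed_compl
  have hge := isOpen_ge_card s hq n
  have heq : IsLocallyClosed {x : X | {y | s.r y x}.encard = (n : ℕ∞)} :=
    ⟨{x : X | (n : ℕ∞) ≤ {y | s.r y x}.encard},
     {x : X | {y | s.r y x}.encard ≤ (n : ℕ∞)}, hge, hle, by
      ext x; simp [le_antisymm_iff, and_comm]⟩
  have hclass : ∀ x x' : X, s.r x x' → {y | s.r y x} = {y | s.r y x'} := by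
    intro x x' hxx'
    ext y
    exact ⟨fun h => s.trans h hxx', fun h => s.trans h (s.symm hxx')⟩
  exact ⟨hle, hge, heq, heq.locallyCompactSpace, fun x x' h => by
    rw [hclass x x' h]; exact ⟨Iff.rfl, Iff.rfl, Iff.rfl⟩⟩
end

section
/- For every n ∈ ℕ with n ≥ 1: the image q(X_{≤n}) of X_{≤n} = {x ∈ X : |[x]| ≤ n} is closed in X/∼, the image q(X_{≥n}) of X_{≥n} = {x ∈ X : |[x]| ≥ n} is open in X/∼, and the image q(X_{=n}) of X_{=n} = {x ∈ X : |[x]| = n} equals q(X_{≤n}) ∩ q(X_{≥n}) and is locally closed in X/∼. -/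
/-- Let `X` be a second countable, locally compact, Hausdorff space with an
equivalence relation whose quotient map `q` is open, and let `n ≥ 1`.  Then
`q(X_{≤n})` is closed, `q(X_{≥n})` is open, and
`q(X_{=n}) = q(X_{≤n}) ∩ q(X_{≥n})` is locally closed in the quotient. -/
theorem quotient_images_card_sets {X : Type*} [TopologicalSpace X]
    [SecondCountableTopology X] [LocallyCompactSpace X] [T2Space X]
    (s : Setoid X) (hq : IsOpenMap (Quotient.mk s)) (n : ℕ) (hn : 1 ≤ n) :
    IsClosed (Quotient.mk s '' {x : X | {y | s.r y x}.encard ≤ (n : ℕ∞)}) ∧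
    IsOpen (Quotient.mk s '' {x : X | (n : ℕ∞) ≤ {y | s.r y x}.encard}) ∧
    (Quotient.mk s '' {x : X | {y | s.r y x}.encard = (n : ℕ∞)} =
      Quotient.mk s '' {x : X | {y | s.r y x}.encard ≤ (n : ℕ∞)} ∩
      Quotient.mk s '' {x : X | (n : ℕ∞) ≤ {y | s.r y x}.encard}) ∧
    IsLocallyClosed (Quotient.mk s '' {x : X | {y | s.r y x}.encard = (n : ℕ∞)}) := by
  set q : X → Quotient s := Quotient.mk s with hqdef
  -- equal classes for equivalent points
  have hrel : ∀ {a b : X}, s.r a b → {y | s.r y a} = {y | s.r y b} := by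
    intro a b hab
    ext y
    exact ⟨fun h => s.trans h hab, fun h => s.trans h (s.symm hab)⟩
  -- saturation lemma
  have hsat : ∀ P : ℕ∞ → Prop,
      q ⁻¹' (q '' {x | P {y | s.r y x}.encard}) = {x | P {y | s.r y x}.encard} := by
    intro P
    ext x
    simp only [Set.mem_preimage, Set.mem_image, Set.mem_setOf_eq]
    constructor
    · rintro ⟨a, ha, hax⟩
      have hax' : s.r a x := Quotient.exact hax
      rwa [← hrel hax']
    · exact fun h => ⟨x, h, rfl⟩
  -- key openness lemma
  have key : ∀ m : ℕ, IsOpen {x : X | (m : ℕ∞) ≤ {y | s.r y x}.encard} := by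
    intro m
    rw [isOpen_iff_mem_nhds]
    intro x hx
    obtain ⟨t, hts, htc⟩ := Set.exists_subset_encard_eq hx
    have htf : t.Finite := Set.finite_of_encard_le_coe htc.le
    obtain ⟨U, hU, hdisj⟩ := htf.t2_separation
    have hVopen : IsOpen (⋂ y ∈ t, q '' U y) :=
      htf.isOpen_biInter fun y _ => hq _ (hU y).2
    have hxV : q x ∈ ⋂ y ∈ t, q '' U y := by
      refine Set.mem_biInter fun y hy => ⟨y, (hU y).1, ?_⟩
      exact Quotient.sound (hts hy)
    refine Filter.mem_of_superset
      ((hVopen.preimage (continuous_quotient_mk')).mem_nhds hxV) ?_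
    intro x' hx'
    simp only [Set.mem_preimage, Set.mem_iInter] at hx'
    -- choose representatives
    have hz : ∀ y : X, y ∈ t → ∃ z, z ∈ U y ∧ q z = q x' := by
      intro y hy
      obtain ⟨z, hz1, hz2⟩ := hx' y hy
      exact ⟨z, hz1, hz2⟩
    classical
    set f : X → X := fun y => if h : y ∈ t then (hz y h).choose else y with hf
    have hf1 : ∀ y ∈ t, f y ∈ U y := by
      intro y hy; simp only [hf, dif_pos hy]; exact (hz y hy).choose_spec.1
    have hf2 : ∀ y ∈ t, q (f y) = q x' := by
      intro y hy; simp only [hf, dif_pos hy]; exact (hz y hy).choose_spec.2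
    have hinj : Set.InjOn f t := by
      intro a ha b hb hab
      by_contra hne
      exact (hdisj ha hb hne).le_bot
        ⟨hf1 a ha, hab ▸ hf1 b hb⟩
    have hmaps : f '' t ⊆ {y | s.r y x'} := by
      rintro _ ⟨y, hy, rfl⟩
      exact Quotient.exact (hf2 y hy)
    calc (m : ℕ∞) = t.encard := htc.symm
      _ = (f '' t).encard := (hinj.encard_image).symm
      _ ≤ _ := Set.encard_le_encard hmaps
  -- closedness of the ≤ n image
  have hclosed : IsClosed (q '' {x : X | {y | s.r y x}.encard ≤ (n : ℕ∞)}) := by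
    rw [← isOpen_compl_iff, ← isQuotientMap_quotient_mk'.isOpen_preimage]
    have heq : q ⁻¹' (q '' {x : X | {y | s.r y x}.encard ≤ (n : ℕ∞)})ᶜ =
        {x : X | ((n + 1 : ℕ) : ℕ∞) ≤ {y | s.r y x}.encard} := by
      rw [Set.preimage_compl, hsat (fun c => c ≤ (n : ℕ∞))]
      ext x
      simp only [Set.mem_compl_iff, Set.mem_setOf_eq, not_le, Nat.cast_add, Nat.cast_one]
      rw [ENat.add_one_le_iff (by simp)]
    show IsOpen (q ⁻¹' (q '' {x : X | {y | s.r y x}.encard ≤ (n : ℕ∞)})ᶜ)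
    rw [heq]
    exact key (n + 1)
  have hopen : IsOpen (q '' {x : X | (n : ℕ∞) ≤ {y | s.r y x}.encard}) := by
    rw [← isQuotientMap_quotient_mk'.isOpen_preimage]
    show IsOpen (q ⁻¹' (q '' {x : X | (n : ℕ∞) ≤ {y | s.r y x}.encard}))
    rw [hsat (fun c => (n : ℕ∞) ≤ c)]
    exact key n
  have heqset : q '' {x : X | {y | s.r y x}.encard = (n : ℕ∞)} =
      q '' {x : X | {y | s.r y x}.encard ≤ (n : ℕ∞)} ∩
      q '' {x : X | (n : ℕ∞) ≤ {y | s.r y x}.encard} := by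
    apply Set.Subset.antisymm
    · intro z hz
      obtain ⟨x, hx, rfl⟩ := hz
      exact ⟨⟨x, le_of_eq hx, rfl⟩, ⟨x, ge_of_eq hx, rfl⟩⟩
    · rintro z ⟨⟨a, ha, rfl⟩, ⟨b, hb, hba⟩⟩
      have hab : s.r b a := Quotient.exact hba
      refine ⟨a, le_antisymm ha ?_, rfl⟩
      rwa [← hrel hab]
  exact ⟨hclosed, hopen, heqset, heqset ▸ hclosed.isLocallyClosed.inter hopen.isLocallyClosed⟩
end

section
/- For every n ∈ ℕ with n ≥ 1, the image q(X_{=n}) of the set X_{=n} = {x ∈ X : |[x]| = n} under the quotient map is a Hausdorff space in the relative (subspace) topology of X/∼. -/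
/-- Let `X` be a second countable, locally compact, Hausdorff space with an
equivalence relation whose quotient map `q` is open, and let `n ≥ 1`.  Then
`q(X_{=n})` is Hausdorff in the subspace topology of the quotient. -/
theorem quotient_image_eq_card_t2 {X : Type*} [TopologicalSpace X]
    [SecondCountableTopology X] [LocallyCompactSpace X] [T2Space X]
    (s : Setoid X) (hq : IsOpenMap (Quotient.mk s)) (n : ℕ) (hn : 1 ≤ n) :
    T2Space (Quotient.mk s '' {x : X | {y | s.r y x}.encard = (n : ℕ∞)}) := by
  set S : Set X := {x : X | {y | s.r y x}.encard = (n : ℕ∞)} with hS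
  constructor
  rintro ⟨c, hc⟩ ⟨d, hd⟩ hne
  obtain ⟨x, hx, rfl⟩ := hc
  obtain ⟨y, hy, rfl⟩ := hd
  have hxy : ¬ s.r x y := fun h => hne (Subtype.ext (Quotient.sound h))
  set Cx : Set X := {z | s.r z x} with hCx
  set Cy : Set X := {z | s.r z y} with hCy
  have hCxfin : Cx.Finite := Set.finite_of_encard_eq_coe hx
  have hCyfin : Cy.Finite := Set.finite_of_encard_eq_coe hy
  have hdisj : Disjoint Cx Cy := by
    rw [Set.disjoint_left]
    intro z hzx hzy
    exact hxy (s.trans (s.symm hzx) hzy)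
  have hF : (Cx ∪ Cy).Finite := hCxfin.union hCyfin
  obtain ⟨U, hU, hUdisj⟩ := hF.t2_separation
  set V1 : Set (Quotient s) := ⋂ p ∈ Cx, Quotient.mk s '' U p with hV1
  set V2 : Set (Quotient s) := ⋂ p ∈ Cy, Quotient.mk s '' U p with hV2
  have hV1open : IsOpen V1 := hCxfin.isOpen_biInter fun p _ => hq _ (hU p).2
  have hV2open : IsOpen V2 := hCyfin.isOpen_biInter fun p _ => hq _ (hU p).2
  refine ⟨Subtype.val ⁻¹' V1, Subtype.val ⁻¹' V2,
    hV1open.preimage continuous_subtype_val, hV2open.preimage continuous_subtype_val,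
    ?_, ?_, ?_⟩
  · simp only [Set.mem_preimage, hV1, Set.mem_iInter]
    intro p hp
    exact ⟨p, (hU p).1, Quotient.sound hp⟩
  · simp only [Set.mem_preimage, hV2, Set.mem_iInter]
    intro p hp
    exact ⟨p, (hU p).1, Quotient.sound hp⟩
  · rw [Set.disjoint_left]
    rintro ⟨c, hc⟩ h1 h2
    obtain ⟨z, hz, rfl⟩ := hc
    simp only [Set.mem_preimage, hV1, hV2, Set.mem_iInter] at h1 h2
    have key : ∀ p ∈ Cx ∪ Cy, ∃ w, w ∈ U p ∧ s.r w z := by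
      rintro p (hp | hp)
      · obtain ⟨w, hw, hwq⟩ := h1 p hp
        exact ⟨w, hw, Quotient.exact hwq⟩
      · obtain ⟨w, hw, hwq⟩ := h2 p hp
        exact ⟨w, hw, Quotient.exact hwq⟩
    have key' : ∀ p : X, ∃ w : X, p ∈ Cx ∪ Cy → w ∈ U p ∧ s.r w z := by
      intro p
      by_cases hp : p ∈ Cx ∪ Cy
      · obtain ⟨w, hw⟩ := key p hp
        exact ⟨w, fun _ => hw⟩
      · exact ⟨p, fun h => absurd h hp⟩
    choose w hw using key'
    have hinj : Set.InjOn w (Cx ∪ Cy) := by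
      intro p hp p' hp' hpp'
      by_contra hne'
      have := hUdisj hp hp' hne'
      exact (Set.disjoint_left.mp this (hw p hp).1) (hpp' ▸ (hw p' hp').1)
    have himg : w '' (Cx ∪ Cy) ⊆ {a | s.r a z} := by
      rintro _ ⟨p, hp, rfl⟩
      exact (hw p hp).2
    have hle : (Cx ∪ Cy).encard ≤ ({a | s.r a z} : Set X).encard := by
      rw [← hinj.encard_image]
      exact Set.encard_le_encard himg
    rw [Set.encard_union_eq hdisj, hx, hy, hz] at hle
    have h2n : ((n + n : ℕ) : ℕ∞) ≤ ((n : ℕ) : ℕ∞) := by push_cast; exact hle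
    have := Nat.cast_le.mp h2n
    omega
end

section
/- Suppose the directed graph E contains no return path. Let x and y be infinite paths in E and let a, b, c, d, N ∈ ℕ be such that x(i + a) = y(i + b) and x(i + c) = y(i + d) for all i ≥ N. Then a + d = b + c (equivalently, the lags b − a and d − c coincide as integers). -/
/-- A path with an eventually periodic tail yields a return path. -/
lemma no_periodic_tail {V E : Type*} (rng src : E → V)
    (hnoret : ¬ ∃ m : ℕ, 1 ≤ m ∧ ∃ e : ℕ → E,
      (∀ j, j + 1 < m → src (e j) = rng (e (j + 1))) ∧
      src (e (m - 1)) = rng (e 0))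
    (x : ℕ → E) (hx : ∀ i, src (x i) = rng (x (i + 1)))
    (p M : ℕ) (hp : 1 ≤ p) (hper : ∀ n, M ≤ n → x (n + p) = x n) : False := by
  apply hnoret
  refine ⟨p, hp, fun j => x (M + j), ?_, ?_⟩
  · intro j hj
    have := hx (M + j)
    simpa [Nat.add_assoc] using this
  · have h1 := hx (M + (p - 1))
    have h2 : M + (p - 1) + 1 = M + p := by omega
    rw [h2] at h1
    rw [h1, hper M le_rfl]
    simp

/-- In a directed graph (with range `rng` and source `src`) containing no return
path, lags of shift equivalences between infinite paths are unique: if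
`x (i + a) = y (i + b)` and `x (i + c) = y (i + d)` for all `i ≥ N`, then
`a + d = b + c`. -/
theorem lag_unique_of_no_return_path {V E : Type*} (rng src : E → V)
    (hnoret : ¬ ∃ m : ℕ, 1 ≤ m ∧ ∃ e : ℕ → E,
      (∀ j, j + 1 < m → src (e j) = rng (e (j + 1))) ∧
      src (e (m - 1)) = rng (e 0))
    (x y : ℕ → E)
    (hx : ∀ i, src (x i) = rng (x (i + 1)))
    (hy : ∀ i, src (y i) = rng (y (i + 1)))
    (a b c d N : ℕ)
    (h1 : ∀ i, N ≤ i → x (i + a) = y (i + b))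
    (h2 : ∀ i, N ≤ i → x (i + c) = y (i + d)) :
    a + d = b + c := by
  have key : ∀ i, N ≤ i → x (i + (a + d)) = x (i + (b + c)) := by
    intro i hi
    have e1 := h1 (i + d) (by omega)
    have e2 := h2 (i + b) (by omega)
    have hy1 : i + d + b = i + b + d := by ring
    rw [hy1] at e1
    have g1 : i + (a + d) = i + d + a := by ring
    have g2 : i + (b + c) = i + b + c := by ring
    rw [g1, g2, e1, ← e2]
  by_contra hne
  rcases Nat.lt_or_ge (a + d) (b + c) with h | h
  · exact no_periodic_tail rng src hnoret x hx (b + c - (a + d)) (N + (a + d))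
      (by omega) (fun n hn => by
        have := key (n - (a + d)) (by omega)
        have e1 : n - (a + d) + (a + d) = n := by omega
        have e2 : n - (a + d) + (b + c) = n + (b + c - (a + d)) := by omega
        rw [e1, e2] at this
        exact this.symm)
  · have h' : b + c < a + d := by omega
    exact no_periodic_tail rng src hnoret x hx (a + d - (b + c)) (N + (b + c))
      (by omega) (fun n hn => by
        have := key (n - (b + c)) (by omega)
        have e1 : n - (b + c) + (a + d) = n + (a + d - (b + c)) := by omega
        have e2 : n - (b + c) + (b + c) = n := by omega
        rw [e1, e2] at this
        exact this)
end

section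
/- Let X be a locally compact Hausdorff space and let μ be a Borel measure on X that is finite on compact sets and has full support (μ(U) > 0 for every nonempty open U ⊆ X). Then the Hilbert space L²(X, μ) of square-integrable complex-valued functions is finite-dimensional if and only if X is a finite set; and in that case the dimension of L²(X, μ) over ℂ equals the cardinality of X. -/
open MeasureTheory

open scoped ComplexInnerProductSpace

section Aux

variable {X : Type*} [TopologicalSpace X] [T2Space X]

/-- In a Hausdorff space, any infinite open set contains a nonempty open subset and an
infinite open subset which are disjoint. -/
lemma aux_step (W : Set X) (hW : IsOpen W) (hWi : W.Infinite) :
    ∃ O W' : Set X, IsOpen O ∧ O.Nonempty ∧ O ⊆ W ∧ IsOpen W' ∧ W'.Infinite ∧ W' ⊆ W ∧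
      Disjoint O W' := by
  by_cases h : ∃ x ∈ W, IsOpen ({x} : Set X)
  · obtain ⟨x, hxW, hx⟩ := h
    exact ⟨{x}, W \ {x}, hx, Set.singleton_nonempty x, Set.singleton_subset_iff.2 hxW,
      hW.sdiff isClosed_singleton, hWi.diff (Set.finite_singleton x), Set.diff_subset,
      Set.disjoint_sdiff_right⟩
  · push_neg at h
    have key : ∀ O : Set X, IsOpen O → O.Nonempty → O ⊆ W → O.Infinite := by
      intro O hO hne hOW
      by_contra hfin
      rw [Set.not_infinite] at hfin
      obtain ⟨y, hy⟩ := hne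
      have h1 : IsOpen (O \ (O \ {y})) := hO.sdiff (Set.Finite.diff hfin : (O \ {y}).Finite).isClosed
      have h2 : O \ (O \ {y}) = {y} := by
        ext z
        simp only [Set.mem_diff, Set.mem_singleton_iff]
        constructor
        · rintro ⟨hz, h2⟩
          by_contra hne'
          exact h2 ⟨hz, hne'⟩
        · rintro rfl
          exact ⟨hy, fun h => h.2 rfl⟩
      rw [h2] at h1
      exact h y (hOW hy) h1
    obtain ⟨x, hx, y, hy, hxy⟩ := hWi.nontrivial
    obtain ⟨U, V, hU, hV, hxU, hyV, hUV⟩ := t2_separation hxy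
    refine ⟨U ∩ W, V ∩ W, hU.inter hW, ⟨x, hxU, hx⟩, Set.inter_subset_right,
      hV.inter hW, ?_, Set.inter_subset_right,
      hUV.mono Set.inter_subset_left Set.inter_subset_left⟩
    exact key _ (hV.inter hW) ⟨y, hyV, hy⟩ Set.inter_subset_right

/-- In an infinite Hausdorff space there is an infinite family of pairwise disjoint
nonempty open sets. -/
lemma aux_family [Infinite X] :
    ∃ f : ℕ → Set X, (∀ n, IsOpen (f n)) ∧ (∀ n, (f n).Nonempty) ∧
      Pairwise (Function.onFun Disjoint f) := by
  have step : ∀ p : {W : Set X // IsOpen W ∧ W.Infinite},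
      ∃ q : Set X × {W : Set X // IsOpen W ∧ W.Infinite},
        IsOpen q.1 ∧ q.1.Nonempty ∧ q.1 ⊆ p.1 ∧ q.2.1 ⊆ p.1 ∧ Disjoint q.1 q.2.1 := by
    rintro ⟨W, hWo, hWi⟩
    obtain ⟨O, W', hO, hOn, hOW, hW'o, hW'i, hW'W, hd⟩ := aux_step W hWo hWi
    exact ⟨(O, ⟨W', hW'o, hW'i⟩), hO, hOn, hOW, hW'W, hd⟩
  choose pick h1 h2 h3 h4 h5 using step
  set Wseq : ℕ → {W : Set X // IsOpen W ∧ W.Infinite} :=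
    fun n => Nat.rec ⟨Set.univ, isOpen_univ, Set.infinite_univ⟩ (fun _ p => (pick p).2) n
    with hWseq
  have hmono : ∀ n m, n ≤ m → (Wseq m).1 ⊆ (Wseq n).1 := by
    intro n m h
    induction m, h using Nat.le_induction with
    | base => exact subset_rfl
    | succ m hm ih => exact Set.Subset.trans (h4 (Wseq m)) ih
  have hkey : ∀ n m, n < m → Disjoint (pick (Wseq n)).1 (pick (Wseq m)).1 := by
    intro n m hnm
    have hsub : (pick (Wseq m)).1 ⊆ (Wseq (n + 1)).1 :=
      Set.Subset.trans (h3 (Wseq m)) (hmono (n + 1) m hnm)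
    have hW : (Wseq (n + 1)).1 = (pick (Wseq n)).2.1 := rfl
    rw [hW] at hsub
    exact (h5 (Wseq n)).mono_right hsub
  refine ⟨fun n => (pick (Wseq n)).1, fun n => h1 _, fun n => h2 _, ?_⟩
  intro i j hij
  rcases lt_or_gt_of_ne hij with h | h
  · exact hkey i j h
  · exact (hkey j i h).symm

end Aux

/-- Let `μ` be a Borel measure of full support on a locally compact Hausdorff
space `X` which is finite on compact sets.  Then `L²(X, μ)` is
finite-dimensional over `ℂ` if and only if `X` is finite, in which case its
dimension equals the cardinality of `X`. -/
theorem l2_finiteDimensional_iff_finite {X : Type*} [TopologicalSpace X]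
    [LocallyCompactSpace X] [T2Space X] [MeasurableSpace X] [BorelSpace X]
    (μ : Measure X)
    (hfin : ∀ K : Set X, IsCompact K → μ K < ⊤)
    (hsupp : ∀ U : Set X, IsOpen U → U.Nonempty → 0 < μ U) :
    (FiniteDimensional ℂ (Lp ℂ 2 μ) ↔ Finite X) ∧
    (Finite X → Module.finrank ℂ (Lp ℂ 2 μ) = Nat.card X) := by
  -- Part 1: if `X` is infinite, `L²` is not finite-dimensional.
  have hinf : Infinite X → ¬ FiniteDimensional ℂ (Lp ℂ 2 μ) := by
    intro hXinf hFD
    obtain ⟨f, hfo, hfne, hfd⟩ := aux_family (X := X)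
    have hS : ∀ n, ∃ S : Set X, IsOpen S ∧ S.Nonempty ∧ S ⊆ f n ∧ μ S < ⊤ := by
      intro n
      obtain ⟨x, hx⟩ := hfne n
      obtain ⟨K, hK, hxK, hKf⟩ := exists_compact_subset (hfo n) hx
      exact ⟨interior K, isOpen_interior, ⟨x, hxK⟩,
        Set.Subset.trans interior_subset hKf,
        lt_of_le_of_lt (measure_mono interior_subset) (hfin K hK)⟩
    choose S hSo hSn hSf hSμ using hS
    have hm : ∀ n, MeasurableSet (S n) := fun n => (hSo n).measurableSet
    have hμ : ∀ n, μ (S n) ≠ ⊤ := fun n => (hSμ n).ne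
    set χ : ℕ → Lp ℂ 2 μ := fun n => indicatorConstLp 2 (hm n) (hμ n) (1 : ℂ) with hχ
    have hinner : ∀ i j, ⟪χ i, χ j⟫ = ((μ (S j ∩ S i)).toReal : ℂ) := by
      intro i j
      rw [hχ]
      rw [L2.inner_indicatorConstLp_one (hm i) (hμ i)]
      rw [setIntegral_indicatorConstLp (hm i) (hm j) (hμ j) (1 : ℂ)]
      simp
      rfl
    have hLI : LinearIndependent ℂ χ := by
      rw [linearIndependent_iff']
      intro s g hsum j hj
      have h0 : ⟪χ j, ∑ i ∈ s, g i • χ i⟫ = 0 := by rw [hsum, inner_zero_right]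
      rw [inner_sum] at h0
      simp_rw [inner_smul_right] at h0
      rw [Finset.sum_eq_single j (fun i hi hij => ?_) (fun h => absurd hj h)] at h0
      · rw [hinner j j, Set.inter_self] at h0
        have hne : ((μ (S j)).toReal : ℂ) ≠ 0 := by
          simp only [ne_eq, Complex.ofReal_eq_zero]
          exact ENNReal.toReal_ne_zero.mpr
            ⟨(hsupp (S j) (hSo j) (hSn j)).ne', hμ j⟩
        exact (mul_eq_zero.mp h0).resolve_right hne
      · have hdisj : Disjoint (S i) (S j) := (hfd hij).mono (hSf i) (hSf j)
        rw [hinner j i, Set.disjoint_iff_inter_eq_empty.mp hdisj]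
        simp
    haveI := hFD
    haveI := hLI.finite
    exact not_finite ℕ
  -- Part 2: if `X` is finite, `L²` is linearly equivalent to `X → ℂ`.
  have hfinpart : Finite X → Nonempty ((X → ℂ) ≃ₗ[ℂ] Lp ℂ 2 μ) := by
    intro hF
    haveI := hF
    haveI := Fintype.ofFinite X
    haveI : IsFiniteMeasure μ := ⟨hfin _ isCompact_univ⟩
    have hmem : ∀ g : X → ℂ, MemLp g 2 μ := by
      intro g
      refine MemLp.of_bound ((measurable_of_countable g).aestronglyMeasurable)
        (∑ x, ‖g x‖) ?_
      exact Filter.Eventually.of_forall fun x =>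
        Finset.single_le_sum (f := fun x => ‖g x‖) (fun i _ => norm_nonneg _)
          (Finset.mem_univ x)
    let L : (X → ℂ) →ₗ[ℂ] Lp ℂ 2 μ :=
      { toFun := fun g => (hmem g).toLp g
        map_add' := fun g h => MemLp.toLp_add (hmem g) (hmem h)
        map_smul' := fun c g => MemLp.toLp_const_smul c (hmem g) }
    have hinj : Function.Injective L := by
      intro g h hgh
      have hae : g =ᵐ[μ] h := by
        rw [← MemLp.toLp_eq_toLp_iff (hmem g) (hmem h)]
        exact hgh
      rw [Filter.EventuallyEq, ae_iff] at hae
      funext x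
      by_contra hne
      have hopen : IsOpen ({x} : Set X) := isOpen_discrete _
      have hle : μ {x} ≤ μ {a | ¬ g a = h a} :=
        measure_mono (by simpa using hne)
      rw [hae] at hle
      exact absurd (le_antisymm hle zero_le)
        (hsupp {x} hopen (Set.singleton_nonempty x)).ne'
    have hsurj : Function.Surjective L := by
      intro f
      exact ⟨⇑f, Lp.toLp_coeFn f (Lp.memLp f)⟩
    exact ⟨LinearEquiv.ofBijective L ⟨hinj, hsurj⟩⟩
  constructor
  · constructor
    · intro hFD
      by_contra hnf
      exact hinf (not_finite_iff_infinite.mp hnf) hFD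
    · intro hF
      obtain ⟨e⟩ := hfinpart hF
      haveI := hF
      exact Module.Finite.equiv e
  · intro hF
    obtain ⟨e⟩ := hfinpart hF
    haveI := hF
    haveI := Fintype.ofFinite X
    rw [← e.finrank_eq, Module.finrank_fintype_fun_eq_card, Nat.card_eq_fintype_card]
end
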